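/- arXiv:1904.10672 — 2 statements merged into one kernel-verified Lean document; each statement's English description precedes it below -/
import Mathlib

section
/- Let λ > 0 and define F₁(λ, X) = C_Sob λ^{-1/9} X^{4/9} − ((b−1)/2) λ^{1/3} X^{2/3} + (2/5) X for X ≥ 0, where b > 1 and C_Sob = 3(2π)^{2/3}/4. If λ ≤ √(5/3) · 2^{5/2} · C_Sob^{3/2} / (b−1)^{5/2} = 3√10 π/(b−1)^{5/2}, then F₁(λ, X) ≥ 0 for all X ≥ 0. -/
open Real

/-!
Write `β = (b - 1) / 2`. The weighted AM-GM inequality with weights `3/5` and `2/5`, applied to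
`β^{5/3} λ^{5/9} X^{4/9}` and `X`, gives
`β λ^{1/3} X^{2/3} ≤ (3/5) β^{5/3} λ^{5/9} X^{4/9} + (2/5) X`,
and the bound on `λ` gives `(3/5) β^{5/3} λ^{5/9} ≤ (3/5)^{2/3} C_Sob λ^{-1/9} ≤ C_Sob λ^{-1/9}`.
-/

noncomputable def massThreshold (b C : ℝ) : ℝ :=
  √(5 / 3) * (2 : ℝ) ^ ((5 : ℝ) / 2) * C ^ ((3 : ℝ) / 2) / (b - 1) ^ ((5 : ℝ) / 2)

lemma mul_rpow_two_thirds_le_add {A B X : ℝ} (hB : 0 ≤ B) (hX : 0 ≤ X)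
    (h : 3 / 5 * B ^ ((5 : ℝ) / 3) ≤ A) :
    B * X ^ ((2 : ℝ) / 3) ≤ A * X ^ ((4 : ℝ) / 9) + 2 / 5 * X := by
  have hB53 : 0 ≤ B ^ ((5 : ℝ) / 3) := rpow_nonneg hB _
  have hX49 : 0 ≤ X ^ ((4 : ℝ) / 9) := rpow_nonneg hX _
  have hsplit : B * X ^ ((2 : ℝ) / 3) =
      (B ^ ((5 : ℝ) / 3) * X ^ ((4 : ℝ) / 9)) ^ ((3 : ℝ) / 5) * X ^ ((2 : ℝ) / 5) := by
    rw [mul_rpow hB53 hX49, ← rpow_mul hB, ← rpow_mul hX, mul_assoc, ← rpow_add' hX (by norm_num)]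
    norm_num
  calc B * X ^ ((2 : ℝ) / 3)
      ≤ 3 / 5 * (B ^ ((5 : ℝ) / 3) * X ^ ((4 : ℝ) / 9)) + 2 / 5 * X := by
        rw [hsplit]
        exact geom_mean_le_arith_mean2_weighted (by norm_num) (by norm_num)
          (mul_nonneg hB53 hX49) hX (by norm_num)
    _ ≤ A * X ^ ((4 : ℝ) / 9) + 2 / 5 * X := by
        rw [← mul_assoc]
        gcongr

lemma rpow_mul_rpow_le_of_le_massThreshold {b C lam : ℝ} (hb : 1 < b) (hC : 0 < C)
    (hlam : 0 < lam) (hthr : lam ≤ massThreshold b C) :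
    ((b - 1) / 2) ^ ((5 : ℝ) / 3) * lam ^ ((2 : ℝ) / 3) ≤ (5 / 3) ^ ((1 : ℝ) / 3) * C := by
  have hb1 : 0 < b - 1 := by linarith
  have hβ : 0 < (b - 1) / 2 := by positivity
  have h : ((b - 1) / 2) ^ ((5 : ℝ) / 2) * lam ≤ √(5 / 3) * C ^ ((3 : ℝ) / 2) := by
    rw [div_rpow hb1.le (by norm_num), div_mul_eq_mul_div, div_le_iff₀ (by positivity)]
    rw [massThreshold, le_div_iff₀ (by positivity)] at hthr
    linarith
  have h23 := rpow_le_rpow (by positivity) h (by norm_num : (0 : ℝ) ≤ 2 / 3)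
  rw [mul_rpow (by positivity) hlam.le, mul_rpow (by positivity) (by positivity), sqrt_eq_rpow,
    ← rpow_mul hβ.le, ← rpow_mul (by norm_num), ← rpow_mul hC.le] at h23
  norm_num at h23
  exact h23

lemma three_fifths_mul_rpow_le_of_le_massThreshold {b C lam : ℝ} (hb : 1 < b) (hC : 0 < C)
    (hlam : 0 < lam) (hthr : lam ≤ massThreshold b C) :
    3 / 5 * ((b - 1) / 2 * lam ^ ((1 : ℝ) / 3)) ^ ((5 : ℝ) / 3) ≤ C * lam ^ (-(1 / 9) : ℝ) := by
  have hβ : 0 ≤ (b - 1) / 2 := by linarith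
  have hlam19 : 0 ≤ lam ^ (-(1 / 9) : ℝ) := by positivity
  have hcoeff : ((b - 1) / 2) ^ ((5 : ℝ) / 3) * lam ^ ((2 : ℝ) / 3) ≤ 5 / 3 * C :=
    (rpow_mul_rpow_le_of_le_massThreshold hb hC hlam hthr).trans
      (mul_le_mul_of_nonneg_right (rpow_le_self_of_one_le (by norm_num) (by norm_num)) hC.le)
  calc 3 / 5 * ((b - 1) / 2 * lam ^ ((1 : ℝ) / 3)) ^ ((5 : ℝ) / 3)
      = 3 / 5 * (((b - 1) / 2) ^ ((5 : ℝ) / 3) * lam ^ ((2 : ℝ) / 3)) * lam ^ (-(1 / 9) : ℝ) := by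
        rw [mul_rpow hβ (by positivity), ← rpow_mul hlam.le, mul_assoc, mul_assoc,
          ← rpow_add hlam]
        norm_num
    _ ≤ 3 / 5 * (5 / 3 * C) * lam ^ (-(1 / 9) : ℝ) := by gcongr
    _ = C * lam ^ (-(1 / 9) : ℝ) := by ring

/-- If `λ ≤ √(5/3)·2^{5/2}·C_Sob^{3/2}/(b-1)^{5/2} = 3√10 π/(b-1)^{5/2}`, then
`F₁(λ,X) = C_Sob λ^{-1/9} X^{4/9} − ((b−1)/2) λ^{1/3} X^{2/3} + (2/5) X ≥ 0`
for all `X ≥ 0`, where `C_Sob = 3(2π)^{2/3}/4`. -/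
theorem stmt3 (b lam : ℝ) (hb : 1 < b) (hlam : 0 < lam)
    (hthr : lam ≤ Real.sqrt (5 / 3) * (2 : ℝ) ^ ((5 : ℝ) / 2) *
      (3 * (2 * π) ^ ((2 : ℝ) / 3) / 4) ^ ((3 : ℝ) / 2) / (b - 1) ^ ((5 : ℝ) / 2)) :
    ∀ X : ℝ, 0 ≤ X →
      0 ≤ (3 * (2 * π) ^ ((2 : ℝ) / 3) / 4) * lam ^ (-(1 / 9) : ℝ) * X ^ ((4 : ℝ) / 9)
            - ((b - 1) / 2) * lam ^ ((1 : ℝ) / 3) * X ^ ((2 : ℝ) / 3)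
            + (2 / 5) * X := by
  intro X hX
  have hC : 0 < 3 * (2 * π) ^ ((2 : ℝ) / 3) / 4 := by positivity
  have hβ : 0 ≤ (b - 1) / 2 * lam ^ ((1 : ℝ) / 3) := by
    have : 0 ≤ (b - 1) / 2 := by linarith
    positivity
  have := mul_rpow_two_thirds_le_add hβ hX
    (three_fifths_mul_rpow_le_of_le_massThreshold hb hC hlam hthr)
  linarith
end

section
/- Let Ω : 𝕊² → ℝ be continuous with ∫_{𝕊²} Ω dσ = 0 and extend K(x) = Ω(x/|x|)/|x|³. Let ψ ∈ C^{0,α}(ℝ³) ∩ L²(ℝ³) ∩ L^∞(ℝ³) for some α ∈ (0,1]. Then the principal value convolution K ⋆ ψ² tends to zero at infinity: for every ε > 0 there exists R_ε > 0 such that |K ⋆ ψ²(x)| < ε whenever |x| > R_ε. -/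
open MeasureTheory Real Filter
open scoped ENNReal
noncomputable section

abbrev E3 := EuclideanSpace ℝ (Fin 3)

/-!
Split the truncated convolution at scale `δ` into its part at a fixed scale `r > δ` and the
annulus `δ < |x - y| < r`. By the cancellation of `K` over annuli, `ψ(y)²` may be replaced on
the annulus by `ψ(y)² - ψ(x)² = O(|x - y|^α)`, so the annulus contributes at most a multiple of
`∫_{|z| < r} |z|^(α - 3) dz`, uniformly in `x` and `δ`; this is small for small `r`. For fixed
`r`, the kernel truncated at `r` is bounded and vanishes at infinity, so by dominated convergence
its convolution with the integrable `ψ²` vanishes at infinity as well.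
-/

open Metric Bornology Set Module
open scoped Topology

theorem abs_sq_sub_sq_le {E : Type*} [SeminormedAddGroup E] {ψ : E → ℝ} {C M α : ℝ}
    (hψ : ∀ x y, |ψ x - ψ y| ≤ C * ‖x - y‖ ^ α) (hM : ∀ x, |ψ x| ≤ M) (x y : E) :
    |ψ x ^ 2 - ψ y ^ 2| ≤ 2 * M * C * ‖x - y‖ ^ α := by
  have hsum : |ψ x + ψ y| ≤ 2 * M := (abs_add_le _ _).trans (by linarith [hM x, hM y])
  calc |ψ x ^ 2 - ψ y ^ 2| = |ψ x - ψ y| * |ψ x + ψ y| := by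
        rw [← abs_mul]; ring_nf
    _ ≤ C * ‖x - y‖ ^ α * (2 * M) :=
        mul_le_mul (hψ x y) hsum (abs_nonneg _) ((abs_nonneg _).trans (hψ x y))
    _ = 2 * M * C * ‖x - y‖ ^ α := by ring

section Kernel

variable {E : Type*} [NormedAddCommGroup E] [NormedSpace ℝ E]

theorem exists_abs_le_of_homogeneous [ProperSpace E] {Ω : E → ℝ}
    (hΩ : ContinuousOn Ω {0}ᶜ)
    (hhom : ∀ s : ℝ, 0 < s → ∀ x : E, x ≠ 0 → Ω (s • x) = Ω x) :
    ∃ A, 0 ≤ A ∧ ∀ z ≠ 0, |Ω z| ≤ A := by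
  obtain ⟨A, hA⟩ := (isCompact_sphere (0 : E) 1).exists_bound_of_continuousOn
    (hΩ.mono fun z hz => ne_of_mem_sphere hz one_ne_zero)
  refine ⟨max A 0, le_max_right _ _, fun z hz => ?_⟩
  have hz' : ‖z‖⁻¹ • z ∈ sphere (0 : E) 1 := by
    simp [norm_smul, norm_ne_zero_iff.2 hz]
  rw [← hhom _ (inv_pos.2 (norm_pos_iff.2 hz)) z hz]
  exact (hA _ hz').trans (le_max_left _ _)

variable {K : E → ℝ} {A : ℝ}

theorem tendsto_nhds_zero_cobounded_of_abs_le [FiniteDimensional ℝ E] [Nontrivial E]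
    (hK : ∀ z ≠ 0, |K z| ≤ A / ‖z‖ ^ finrank ℝ E) : Tendsto K (cobounded E) (𝓝 0) := by
  have hdecay : Tendsto (fun z : E => A / ‖z‖ ^ finrank ℝ E) (cobounded E) (𝓝 0) :=
    tendsto_const_nhds.div_atTop
      ((tendsto_pow_atTop finrank_pos.ne').comp tendsto_norm_cobounded_atTop)
  refine squeeze_zero_norm' ?_ hdecay
  filter_upwards [eventually_ne_cobounded 0] with z hz
  exact hK z hz

theorem abs_le_div_pow_of_le_norm (hA : 0 ≤ A)
    (hK : ∀ z ≠ 0, |K z| ≤ A / ‖z‖ ^ finrank ℝ E) {δ : ℝ} (hδ : 0 < δ) {z : E}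
    (hz : δ ≤ ‖z‖) : |K z| ≤ A / δ ^ finrank ℝ E :=
  (hK z (norm_pos_iff.1 (hδ.trans_le hz))).trans (by gcongr)

end Kernel

theorem measurableSet_norm_mem_Ioo {E : Type*} [NormedAddCommGroup E] [MeasurableSpace E]
    [OpensMeasurableSpace E] (δ r : ℝ) : MeasurableSet {z : E | δ < ‖z‖ ∧ ‖z‖ < r} :=
  (measurableSet_lt measurable_const measurable_norm).inter
    (measurableSet_lt measurable_norm measurable_const)

section PrincipalValue

variable {E : Type*} [NormedAddCommGroup E] [NormedSpace ℝ E] [MeasurableSpace E]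
  [BorelSpace E] {μ : Measure E}

/-- The principal value `K ⋆ f` is the limit of `truncConv μ K f δ` as `δ → 0⁺`. -/
def truncConv (μ : Measure E) (K f : E → ℝ) (δ : ℝ) (x : E) : ℝ :=
  ∫ y in {y | δ < ‖x - y‖}, K (x - y) * f y ∂μ

variable {K f : E → ℝ} {A : ℝ}

theorem integrableOn_mul_of_le_norm (hA : 0 ≤ A)
    (hK : ∀ z ≠ 0, |K z| ≤ A / ‖z‖ ^ finrank ℝ E) (hKm : AEStronglyMeasurable K μ)
    {g : E → ℝ} (hg : Integrable g μ) {δ : ℝ} (hδ : 0 < δ) :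
    IntegrableOn (fun z => K z * g z) {z | δ ≤ ‖z‖} μ :=
  hg.integrableOn.bdd_mul hKm.restrict <|
    ae_restrict_of_forall_mem (measurableSet_le measurable_const measurable_norm)
      fun _ hz => abs_le_div_pow_of_le_norm hA hK hδ hz

variable [FiniteDimensional ℝ E] [μ.IsAddHaarMeasure]

theorem truncConv_eq_setIntegral_comp_sub (δ : ℝ) (x : E) :
    truncConv μ K f δ x = ∫ z in {z | δ < ‖z‖}, K z * f (x - z) ∂μ := by
  have h := (Measure.measurePreserving_sub_left μ x).setIntegral_preimage_emb
    (MeasurableEquiv.subLeft x).measurableEmbedding (fun z => K z * f (x - z)) {z | δ < ‖z‖}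
  simp only [sub_sub_cancel] at h
  exact h

variable [Nontrivial E]

theorem integrableOn_ball_norm_rpow {α : ℝ} (hα : 0 < α) (r : ℝ) :
    IntegrableOn (fun z : E => ‖z‖ ^ (α - finrank ℝ E)) (ball 0 r) μ := by
  refine integrableOn_ball_of_norm_le_rpow (C := 1) (α := finrank ℝ E - α) finrank_pos
    (by linarith) (ae_of_all _ fun z => ?_)
    (measurable_norm.pow_const _).aestronglyMeasurable
  rw [norm_of_nonneg (rpow_nonneg (norm_nonneg z) _), one_mul, neg_sub]

theorem tendsto_setIntegral_ball_norm_rpow {α : ℝ} (hα : 0 < α) :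
    Tendsto (fun r => ∫ z in ball (0 : E) r, ‖z‖ ^ (α - finrank ℝ E) ∂μ) (𝓝[>] 0) (𝓝 0) := by
  have hμ : Tendsto (fun r => μ (ball (0 : E) r)) (𝓝[>] 0) (𝓝 0) := by
    have h : Tendsto (fun r : ℝ => ENNReal.ofReal (r ^ finrank ℝ E) * μ (ball 0 1)) (𝓝 0)
        (𝓝 (ENNReal.ofReal (0 ^ finrank ℝ E) * μ (ball 0 1))) :=
      ENNReal.Tendsto.mul_const (ENNReal.tendsto_ofReal (continuous_pow _).continuousAt)
        (Or.inr measure_ball_lt_top.ne)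
    rw [zero_pow finrank_pos.ne', ENNReal.ofReal_zero, zero_mul] at h
    refine (h.mono_left nhdsWithin_le_nhds).congr' ?_
    filter_upwards [self_mem_nhdsWithin] with r hr
    exact (Measure.addHaar_ball_of_pos μ 0 hr).symm
  have hν : Tendsto (fun r => μ.restrict (ball 0 1) (ball (0 : E) r)) (𝓝[>] 0) (𝓝 0) :=
    tendsto_of_tendsto_of_tendsto_of_le_of_le tendsto_const_nhds hμ (fun _ => bot_le)
      fun r => Measure.restrict_le_self _
  refine ((integrableOn_ball_norm_rpow hα 1).tendsto_setIntegral_nhds_zero hν).congr' ?_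
  filter_upwards [Ioo_mem_nhdsGT one_pos] with r hr
  rw [Measure.restrict_restrict measurableSet_ball, inter_eq_left.2 (ball_subset_ball hr.2.le)]

theorem truncConv_sub_truncConv (hA : 0 ≤ A)
    (hK : ∀ z ≠ 0, |K z| ≤ A / ‖z‖ ^ finrank ℝ E) (hKm : AEStronglyMeasurable K μ)
    (hcancel : ∀ r R : ℝ, 0 < r → r < R → ∫ z in {z : E | r < ‖z‖ ∧ ‖z‖ < R}, K z ∂μ = 0)
    (hf : Integrable f μ) (x : E) {δ r : ℝ} (hδ : 0 < δ) (hδr : δ < r) :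
    truncConv μ K f δ x - truncConv μ K f r x =
      ∫ z in {z : E | δ < ‖z‖ ∧ ‖z‖ < r}, K z * (f (x - z) - f x) ∂μ := by
  set S := {z : E | δ < ‖z‖ ∧ ‖z‖ < r}
  have hSball : S ⊆ ball 0 r := fun z hz => mem_ball_zero_iff.2 hz.2
  have hint {s : Set E} (hs : s ⊆ {z | δ ≤ ‖z‖}) :
      IntegrableOn (fun z => K z * f (x - z)) s μ :=
    (integrableOn_mul_of_le_norm hA hK hKm (hf.comp_sub_left x) hδ).mono_set hs
  have hKS : IntegrableOn K S μ :=
    Measure.integrableOn_of_bounded ((measure_mono hSball).trans_lt measure_ball_lt_top).ne hKm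
      (ae_restrict_of_forall_mem (measurableSet_norm_mem_Ioo δ r)
        fun z hz => abs_le_div_pow_of_le_norm hA hK hδ hz.1.le)
  -- the sphere `‖z‖ = r`, on which the two sides differ, is `μ`-null
  have hsplit : {z : E | δ < ‖z‖} =ᵐ[μ] (S ∪ {z | r < ‖z‖} : Set E) := by
    filter_upwards [measure_eq_zero_iff_ae_notMem.1 (Measure.addHaar_sphere μ 0 r)] with z hz
    have hne : ‖z‖ ≠ r := by rwa [mem_sphere_zero_iff_norm] at hz
    apply propext
    constructor
    · intro h; rcases hne.lt_or_gt with h' | h' <;> [exact .inl ⟨h, h'⟩; exact .inr h']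
    · rintro (h | h); exacts [h.1, hδr.trans h]
  have hdisj : Disjoint S {z | r < ‖z‖} :=
    disjoint_left.2 fun z hz h => lt_asymm hz.2 h
  rw [truncConv_eq_setIntegral_comp_sub, truncConv_eq_setIntegral_comp_sub,
    setIntegral_congr_set hsplit,
    setIntegral_union hdisj (measurableSet_lt measurable_const measurable_norm)
      (hint fun z hz => hz.1.le) (hint fun z hz => (hδr.trans hz).le), add_sub_cancel_right]
  simp_rw [mul_sub]
  rw [integral_sub (hint fun z hz => hz.1.le) (hKS.mul_const _), integral_mul_const,
    hcancel δ r hδ hδr, zero_mul, sub_zero]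

theorem abs_truncConv_sub_truncConv_le (hA : 0 ≤ A)
    (hK : ∀ z ≠ 0, |K z| ≤ A / ‖z‖ ^ finrank ℝ E) (hKm : AEStronglyMeasurable K μ)
    (hcancel : ∀ r R : ℝ, 0 < r → r < R → ∫ z in {z : E | r < ‖z‖ ∧ ‖z‖ < R}, K z ∂μ = 0)
    (hf : Integrable f μ) {L α : ℝ} (hL : 0 ≤ L) (hα : 0 < α)
    (hHol : ∀ x y, |f x - f y| ≤ L * ‖x - y‖ ^ α) (x : E) {δ r : ℝ} (hδ : 0 < δ)
    (hδr : δ < r) :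
    |truncConv μ K f δ x - truncConv μ K f r x| ≤
      A * L * ∫ z in ball (0 : E) r, ‖z‖ ^ (α - finrank ℝ E) ∂μ := by
  set S := {z : E | δ < ‖z‖ ∧ ‖z‖ < r}
  have hSball : S ⊆ ball 0 r := fun z hz => mem_ball_zero_iff.2 hz.2
  have hball : IntegrableOn (fun z => A * L * ‖z‖ ^ (α - finrank ℝ E)) (ball 0 r) μ :=
    (integrableOn_ball_norm_rpow hα r).const_mul _
  have hpt : ∀ z ∈ S, ‖K z * (f (x - z) - f x)‖ ≤ A * L * ‖z‖ ^ (α - finrank ℝ E) := by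
    intro z hz
    have hz0 : 0 < ‖z‖ := hδ.trans hz.1
    have hfz : |f (x - z) - f x| ≤ L * ‖z‖ ^ α := by
      simpa only [sub_sub_cancel_left, norm_neg] using hHol (x - z) x
    calc ‖K z * (f (x - z) - f x)‖ ≤ A / ‖z‖ ^ finrank ℝ E * (L * ‖z‖ ^ α) := by
          rw [norm_mul, norm_eq_abs, norm_eq_abs]
          exact mul_le_mul (hK z (norm_pos_iff.1 hz0)) hfz (abs_nonneg _) (by positivity)
      _ = A * L * ‖z‖ ^ (α - finrank ℝ E) := by
          rw [rpow_sub hz0, rpow_natCast]; ring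
  rw [truncConv_sub_truncConv hA hK hKm hcancel hf x hδ hδr, ← integral_const_mul]
  calc _ ≤ ∫ z in S, A * L * ‖z‖ ^ (α - finrank ℝ E) ∂μ :=
        norm_integral_le_of_norm_le (hball.mono_set hSball)
          (ae_restrict_of_forall_mem (measurableSet_norm_mem_Ioo δ r) hpt)
    _ ≤ _ := setIntegral_mono_set hball
        (.of_forall fun z => by positivity) hSball.eventuallyLE

theorem tendsto_truncConv_cobounded (hA : 0 ≤ A)
    (hK : ∀ z ≠ 0, |K z| ≤ A / ‖z‖ ^ finrank ℝ E) (hKm : AEStronglyMeasurable K μ)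
    (hf : Integrable f μ) {δ : ℝ} (hδ : 0 < δ) :
    Tendsto (truncConv μ K f δ) (cobounded E) (𝓝 0) := by
  have : (cobounded E).IsCountablyGenerated := by rw [← comap_norm_atTop]; infer_instance
  have hs (x : E) : MeasurableSet {y | δ < ‖x - y‖} :=
    measurableSet_lt measurable_const (measurable_const.sub measurable_id).norm
  have hKx (x : E) : AEStronglyMeasurable (fun y => K (x - y)) μ :=
    hKm.comp_quasiMeasurePreserving
      (Measure.measurePreserving_sub_left μ x).quasiMeasurePreserving
  have hind : truncConv μ K f δ =
      fun x => ∫ y, {y | δ < ‖x - y‖}.indicator (fun y => K (x - y) * f y) y ∂μ :=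
    funext fun x => (integral_indicator (hs x)).symm
  rw [hind, ← integral_zero E ℝ]
  refine tendsto_integral_filter_of_dominated_convergence
    (fun y => A / δ ^ finrank ℝ E * ‖f y‖)
    (.of_forall fun x => ((hKx x).mul hf.1).indicator (hs x))
    (.of_forall fun x => .of_forall fun y => ?_) (hf.norm.const_mul _) (.of_forall fun y => ?_)
  · by_cases hy : y ∈ {y | δ < ‖x - y‖}
    · rw [indicator_of_mem hy, norm_mul, norm_eq_abs]
      exact mul_le_mul_of_nonneg_right (abs_le_div_pow_of_le_norm hA hK hδ (le_of_lt hy))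
        (norm_nonneg _)
    · rw [indicator_of_notMem hy, norm_zero]
      positivity
  · have hlim : Tendsto (fun x => K (x - y) * f y) (cobounded E) (𝓝 0) := by
      simpa using ((tendsto_nhds_zero_cobounded_of_abs_le hK).comp
        (tendsto_sub_const_cobounded y)).mul_const (f y)
    refine squeeze_zero_norm (fun x => norm_indicator_le_norm_self _ _) ?_
    simpa using hlim.norm

theorem tendsto_cobounded_of_tendsto_truncConv (hA : 0 ≤ A)
    (hK : ∀ z ≠ 0, |K z| ≤ A / ‖z‖ ^ finrank ℝ E) (hKm : AEStronglyMeasurable K μ)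
    (hcancel : ∀ r R : ℝ, 0 < r → r < R → ∫ z in {z : E | r < ‖z‖ ∧ ‖z‖ < R}, K z ∂μ = 0)
    (hf : Integrable f μ) {L α : ℝ} (hL : 0 ≤ L) (hα : 0 < α)
    (hHol : ∀ x y, |f x - f y| ≤ L * ‖x - y‖ ^ α) {g : E → ℝ}
    (hg : ∀ x, Tendsto (fun δ => truncConv μ K f δ x) (𝓝[>] 0) (𝓝 (g x))) :
    Tendsto g (cobounded E) (𝓝 0) := by
  rw [Metric.tendsto_nhds]
  intro ε hε
  set J := fun r => A * L * ∫ z in ball (0 : E) r, ‖z‖ ^ (α - finrank ℝ E) ∂μ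
  have hJ : Tendsto J (𝓝[>] 0) (𝓝 0) := by
    simpa [J] using (tendsto_setIntegral_ball_norm_rpow (μ := μ) hα).const_mul (A * L)
  obtain ⟨r, hJr, hr⟩ :=
    ((hJ.eventually (gt_mem_nhds (half_pos hε))).and self_mem_nhdsWithin).exists
  filter_upwards [Metric.tendsto_nhds.1 (tendsto_truncConv_cobounded hA hK hKm hf hr) _
    (half_pos hε)] with x hx
  have hgx : |g x - truncConv μ K f r x| ≤ J r := by
    refine le_of_tendsto (((hg x).sub_const _).abs) ?_
    filter_upwards [Ioo_mem_nhdsGT hr] with δ hδ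
    exact abs_truncConv_sub_truncConv_le hA hK hKm hcancel hf hL hα hHol x hδ.1 hδ.2
  rw [dist_zero_right, norm_eq_abs] at hx ⊢
  linarith [abs_sub_abs_le_abs_sub (g x) (truncConv μ K f r x)]

end PrincipalValue

theorem stmt10_general (Ω : E3 → ℝ) (hΩcont : ContinuousOn Ω {(0 : E3)}ᶜ)
    (hΩhom : ∀ s : ℝ, 0 < s → ∀ x : E3, x ≠ 0 → Ω (s • x) = Ω x)
    (K : E3 → ℝ) (hKdef : ∀ x : E3, x ≠ 0 → K x = Ω x / ‖x‖ ^ 3)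
    (hcancel : ∀ r R : ℝ, 0 < r → r < R →
      (∫ x in {x : E3 | r < ‖x‖ ∧ ‖x‖ < R}, K x) = 0)
    (ψ : E3 → ℝ) (α : ℝ) (hα : 0 < α)
    (hHol : ∃ C : ℝ, 0 < C ∧ ∀ x y : E3, |ψ x - ψ y| ≤ C * ‖x - y‖ ^ α)
    (hψ2 : MemLp ψ 2 volume) (hψinf : ∃ M : ℝ, ∀ x : E3, |ψ x| ≤ M)
    (g : E3 → ℝ)
    (hg : ∀ x : E3, Tendsto (fun δ : ℝ =>
        ∫ y in {y : E3 | δ < ‖x - y‖}, K (x - y) * ψ y ^ 2)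
      (nhdsWithin 0 (Set.Ioi 0)) (nhds (g x))) :
    ∀ ε : ℝ, 0 < ε → ∃ R : ℝ, 0 < R ∧ ∀ x : E3, R < ‖x‖ → |g x| < ε := by
  obtain ⟨C, hC, hHol⟩ := hHol
  obtain ⟨M, hM⟩ := hψinf
  obtain ⟨A, hA, hΩA⟩ := exists_abs_le_of_homogeneous hΩcont hΩhom
  have hK : ∀ z ≠ 0, |K z| ≤ A / ‖z‖ ^ finrank ℝ E3 := by
    intro z hz
    rw [finrank_euclideanSpace_fin, hKdef z hz, abs_div,
      abs_of_pos (pow_pos (norm_pos_iff.2 hz) 3)]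
    gcongr
    exact hΩA z hz
  have hKm : AEStronglyMeasurable K volume := by
    have hKc : ContinuousOn K {0}ᶜ := (hΩcont.div (continuous_norm.pow 3).continuousOn
      fun z hz => pow_ne_zero 3 (norm_ne_zero_iff.2 hz)).congr fun z hz => hKdef z hz
    simpa only [restrict_compl_singleton] using
      hKc.aestronglyMeasurable (μ := volume) isOpen_compl_singleton.measurableSet
  have hL : 0 ≤ 2 * M * C := by
    have := (abs_nonneg _).trans (hM 0)
    positivity
  have hlim := tendsto_cobounded_of_tendsto_truncConv hA hK hKm hcancel hψ2.integrable_sq hL hα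
    (abs_sq_sub_sq_le hHol hM) hg
  intro ε hε
  obtain ⟨R, -, hR⟩ := hasBasis_cobounded_norm.eventually_iff.1 (Metric.tendsto_nhds.1 hlim ε hε)
  refine ⟨max R 1, lt_max_of_lt_right one_pos, fun x hx => ?_⟩
  simpa using hR ((le_max_left R 1).trans hx.le)

/-- The principal value convolution `K ⋆ ψ²` of a Hölder continuous, bounded and
square-integrable `ψ²` against a kernel `K(x) = Ω(x/|x|)/|x|³` with zero angular
average tends to `0` at infinity. -/
theorem stmt10 (Ω : E3 → ℝ) (hΩcont : ContinuousOn Ω {(0 : E3)}ᶜ)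
    (hΩhom : ∀ s : ℝ, 0 < s → ∀ x : E3, x ≠ 0 → Ω (s • x) = Ω x)
    (K : E3 → ℝ) (hKdef : ∀ x : E3, x ≠ 0 → K x = Ω x / ‖x‖ ^ 3)
    (hcancel : ∀ r R : ℝ, 0 < r → r < R →
      (∫ x in {x : E3 | r < ‖x‖ ∧ ‖x‖ < R}, K x) = 0)
    (ψ : E3 → ℝ) (α : ℝ) (hα : 0 < α) (hα1 : α ≤ 1)
    (hHol : ∃ C : ℝ, 0 < C ∧ ∀ x y : E3, |ψ x - ψ y| ≤ C * ‖x - y‖ ^ α)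
    (hψ2 : MemLp ψ 2 volume) (hψinf : ∃ M : ℝ, ∀ x : E3, |ψ x| ≤ M)
    (g : E3 → ℝ)
    (hg : ∀ x : E3, Tendsto (fun δ : ℝ =>
        ∫ y in {y : E3 | δ < ‖x - y‖}, K (x - y) * ψ y ^ 2)
      (nhdsWithin 0 (Set.Ioi 0)) (nhds (g x))) :
    ∀ ε : ℝ, 0 < ε → ∃ R : ℝ, 0 < R ∧ ∀ x : E3, R < ‖x‖ → |g x| < ε :=
  stmt10_general Ω hΩcont hΩhom K hKdef hcancel ψ α hα hHol hψ2 hψinf g hg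
end
end
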